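/- arXiv:2106.12374 — 7 statements merged into one kernel-verified Lean document; each statement's English description precedes it below -/
import Mathlib

section
/- Let ε ∈ (0,1) and define F : ℝ^N → ℝ by F(y) = (ε² + |y|²)^((1+ε)/2), so that its gradient is ∇F(y) = (1+ε) y (ε² + |y|²)^((ε−1)/2). Then there exists a constant c_ε > 0 such that for all y₀, y₁ ∈ ℝ^N, (∇F(y₁) − ∇F(y₀)) · (y₁ − y₀) ≥ c_ε |y₁ − y₀|² / (ε² + |y₁|² + |y₀|²)^((1−ε)/2). -/
/-!
Write `∇F y = (1 + ε) w(‖y‖) y` with the decreasing weight `w s = (ε² + s²) ^ ((ε - 1) / 2)`.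
For `a = ‖y₀‖ ≤ b = ‖y₁‖`,
`2 ⟪w b • y₁ - w a • y₀, y₁ - y₀⟫ = (w a + w b) ‖y₁ - y₀‖² + (w b - w a) (b² - a²)`.
The second term is nonpositive, but it is paid for by the one-dimensional growth
`(s w s)' = (ε² + s²) ^ ((ε - 3) / 2) (ε² + ε s²) ≥ ε w s`, which with `b - a ≤ ‖y₁ - y₀‖` leaves
`ε w b ‖y₁ - y₀‖²`; finally `w b ≥ (ε² + ‖y₁‖² + ‖y₀‖²) ^ ((ε - 1) / 2)`.
-/

open Set

open scoped InnerProductSpace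

section InnerProduct

variable {E : Type*} [NormedAddCommGroup E] [InnerProductSpace ℝ E]

theorem inner_smul_sub_smul_sub_eq (A B : ℝ) (y₀ y₁ : E) :
    ⟪B • y₁ - A • y₀, y₁ - y₀⟫_ℝ
      = ((A + B) * ‖y₁ - y₀‖ ^ 2 + (B - A) * (‖y₁‖ ^ 2 - ‖y₀‖ ^ 2)) / 2 := by
  simp only [norm_sub_sq_real, inner_sub_left, inner_sub_right, real_inner_smul_left,
    real_inner_self_eq_norm_sq, real_inner_comm y₀ y₁]
  ring

theorem mul_norm_sub_sq_le_inner_smul_sub_smul {A B κ : ℝ} {y₀ y₁ : E}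
    (hB : 0 ≤ B) (hBA : B ≤ A) (hκ : κ ≤ 1) (hy : ‖y₀‖ ≤ ‖y₁‖)
    (hgrowth : κ * B * (‖y₁‖ - ‖y₀‖) ≤ ‖y₁‖ * B - ‖y₀‖ * A) :
    κ * B * ‖y₁ - y₀‖ ^ 2 ≤ ⟪B • y₁ - A • y₀, y₁ - y₀⟫_ℝ := by
  rw [inner_smul_sub_smul_sub_eq]
  have hnorm : (‖y₁‖ - ‖y₀‖) ^ 2 ≤ ‖y₁ - y₀‖ ^ 2 :=
    sq_le_sq.mpr ((abs_norm_sub_norm_le y₁ y₀).trans (le_abs_self _))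
  have hcoef : 0 ≤ A + B - 2 * κ * B := by nlinarith
  -- twice the difference of the two sides is
  -- `(A + B - 2κB) (‖y₁ - y₀‖² - (‖y₁‖ - ‖y₀‖)²) + 2 (‖y₁‖ - ‖y₀‖) (slack in hgrowth)`
  nlinarith [mul_nonneg hcoef (sub_nonneg.mpr hnorm),
    mul_nonneg (sub_nonneg.mpr hy) (sub_nonneg.mpr hgrowth)]

end InnerProduct

noncomputable def regWeight (δ ε s : ℝ) : ℝ := (δ ^ 2 + s ^ 2) ^ ((ε - 1) / 2)

namespace regWeight

variable {E : Type*} [NormedAddCommGroup E] [InnerProductSpace ℝ E] {δ ε : ℝ}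

theorem pos (hδ : δ ≠ 0) (s : ℝ) : 0 < regWeight δ ε s :=
  Real.rpow_pos_of_pos (by positivity) _

theorem le_of_sq_le (hδ : δ ≠ 0) (hε : ε ≤ 1) {s t : ℝ} (hst : s ^ 2 ≤ t ^ 2) :
    regWeight δ ε t ≤ regWeight δ ε s :=
  Real.rpow_le_rpow_of_nonpos (by positivity) (by linarith) (by linarith)

theorem hasDerivAt_mul_self (hδ : δ ≠ 0) (x : ℝ) :
    HasDerivAt (fun s => s * regWeight δ ε s)
      ((δ ^ 2 + x ^ 2) ^ ((ε - 1) / 2 - 1) * (δ ^ 2 + ε * x ^ 2)) x := by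
  have hx : δ ^ 2 + x ^ 2 ≠ 0 := by positivity
  have hsq : HasDerivAt (fun s : ℝ => δ ^ 2 + s ^ 2) (2 * x) x := by
    simpa using (hasDerivAt_pow 2 x).const_add (δ ^ 2)
  have hw : HasDerivAt (regWeight δ ε)
      ((ε - 1) / 2 * (δ ^ 2 + x ^ 2) ^ ((ε - 1) / 2 - 1) * (2 * x)) x :=
    ((Real.hasDerivAt_rpow_const (p := (ε - 1) / 2) (Or.inl hx)).comp x hsq :)
  refine ((hasDerivAt_id' x).mul hw).congr_deriv ?_
  rw [regWeight, Real.rpow_sub_one hx]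
  field_simp
  ring

theorem mul_mul_sub_le_mul_sub_mul (hδ : δ ≠ 0) (hε₀ : 0 ≤ ε) (hε₁ : ε ≤ 1) {a b : ℝ}
    (ha : 0 ≤ a) (hab : a ≤ b) :
    ε * regWeight δ ε b * (b - a) ≤ b * regWeight δ ε b - a * regWeight δ ε a := by
  have hderiv := hasDerivAt_mul_self (ε := ε) hδ
  have hdiff : Differentiable ℝ fun s => s * regWeight δ ε s :=
    fun x => (hderiv x).differentiableAt
  refine (convex_Icc 0 b).mul_sub_le_image_sub_of_le_deriv hdiff.continuous.continuousOn
    hdiff.differentiableOn (fun x hx => ?_) a ⟨ha, hab⟩ b ⟨ha.trans hab, le_rfl⟩ hab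
  rw [interior_Icc] at hx
  have hx2 : 0 < δ ^ 2 + x ^ 2 := by positivity
  have hw : regWeight δ ε x = (δ ^ 2 + x ^ 2) ^ ((ε - 1) / 2 - 1) * (δ ^ 2 + x ^ 2) := by
    rw [regWeight, Real.rpow_sub_one hx2.ne', div_mul_cancel₀ _ hx2.ne']
  calc ε * regWeight δ ε b
      ≤ ε * regWeight δ ε x := by
        gcongr; exact le_of_sq_le hδ hε₁ (pow_le_pow_left₀ hx.1.le hx.2.le 2)
    _ = (δ ^ 2 + x ^ 2) ^ ((ε - 1) / 2 - 1) * (ε * (δ ^ 2 + x ^ 2)) := by rw [hw]; ring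
    _ ≤ (δ ^ 2 + x ^ 2) ^ ((ε - 1) / 2 - 1) * (δ ^ 2 + ε * x ^ 2) := by
        gcongr; nlinarith [sq_nonneg δ]
    _ = deriv (fun s => s * regWeight δ ε s) x := (hderiv x).deriv.symm

theorem mul_mul_norm_sub_sq_le_inner_of_norm_le (hδ : δ ≠ 0) (hε₀ : 0 ≤ ε) (hε₁ : ε ≤ 1)
    {y₀ y₁ : E} (hy : ‖y₀‖ ≤ ‖y₁‖) :
    ε * regWeight δ ε ‖y₁‖ * ‖y₁ - y₀‖ ^ 2
      ≤ ⟪regWeight δ ε ‖y₁‖ • y₁ - regWeight δ ε ‖y₀‖ • y₀, y₁ - y₀⟫_ℝ :=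
  mul_norm_sub_sq_le_inner_smul_sub_smul (pos hδ _).le
    (le_of_sq_le hδ hε₁ (pow_le_pow_left₀ (norm_nonneg _) hy 2)) hε₁ hy
    (mul_mul_sub_le_mul_sub_mul hδ hε₀ hε₁ (norm_nonneg _) hy)

theorem mul_rpow_mul_norm_sub_sq_le_inner (hδ : δ ≠ 0) (hε₀ : 0 ≤ ε) (hε₁ : ε ≤ 1)
    (y₀ y₁ : E) :
    ε * (δ ^ 2 + ‖y₁‖ ^ 2 + ‖y₀‖ ^ 2) ^ ((ε - 1) / 2) * ‖y₁ - y₀‖ ^ 2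
      ≤ ⟪regWeight δ ε ‖y₁‖ • y₁ - regWeight δ ε ‖y₀‖ • y₀, y₁ - y₀⟫_ℝ := by
  wlog hy : ‖y₀‖ ≤ ‖y₁‖ generalizing y₀ y₁
  · rw [← neg_sub y₀ y₁, ← neg_sub (regWeight δ ε ‖y₀‖ • y₀), inner_neg_neg, norm_neg,
      add_right_comm]
    exact this y₁ y₀ (le_of_not_ge hy)
  refine le_trans ?_ (mul_mul_norm_sub_sq_le_inner_of_norm_le hδ hε₀ hε₁ hy)
  gcongr
  exact Real.rpow_le_rpow_of_nonpos (by positivity) (by nlinarith [sq_nonneg ‖y₀‖]) (by linarith)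

end regWeight

/-- Strong monotonicity of the gradient of `F y = (ε² + ‖y‖²)^((1+ε)/2)`,
whose gradient is `∇F y = (1+ε) (ε² + ‖y‖²)^((ε-1)/2) • y`. -/
theorem gradF_strong_monotone (N : ℕ) (ε : ℝ) (hε : ε ∈ Ioo (0 : ℝ) 1) :
    ∃ c : ℝ, 0 < c ∧ ∀ y₀ y₁ : EuclideanSpace ℝ (Fin N),
      (inner ℝ
        ((((1 + ε) * (ε ^ 2 + ‖y₁‖ ^ 2) ^ ((ε - 1) / 2)) • y₁)
          - (((1 + ε) * (ε ^ 2 + ‖y₀‖ ^ 2) ^ ((ε - 1) / 2)) • y₀))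
        (y₁ - y₀) : ℝ)
      ≥ c * ‖y₁ - y₀‖ ^ 2 / (ε ^ 2 + ‖y₁‖ ^ 2 + ‖y₀‖ ^ 2) ^ ((1 - ε) / 2) := by
  obtain ⟨hε₀, hε₁⟩ := hε
  refine ⟨ε * (1 + ε), by positivity, fun y₀ y₁ => ?_⟩
  have key := regWeight.mul_rpow_mul_norm_sub_sq_le_inner hε₀.ne' hε₀.le hε₁.le y₀ y₁
  have hS : 0 < ε ^ 2 + ‖y₁‖ ^ 2 + ‖y₀‖ ^ 2 := by positivity
  calc ε * (1 + ε) * ‖y₁ - y₀‖ ^ 2 / (ε ^ 2 + ‖y₁‖ ^ 2 + ‖y₀‖ ^ 2) ^ ((1 - ε) / 2)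
      = (1 + ε) * (ε * (ε ^ 2 + ‖y₁‖ ^ 2 + ‖y₀‖ ^ 2) ^ ((ε - 1) / 2) * ‖y₁ - y₀‖ ^ 2) := by
        rw [show (ε - 1) / 2 = -((1 - ε) / 2) by ring, Real.rpow_neg hS.le]
        ring
    _ ≤ (1 + ε) * ⟪regWeight ε ε ‖y₁‖ • y₁ - regWeight ε ε ‖y₀‖ • y₀, y₁ - y₀⟫_ℝ := by
        gcongr
    _ = _ := by
        rw [← real_inner_smul_left, smul_sub, smul_smul, smul_smul]
        rfl
end

section
/- Let ε ∈ (0,1) and F(y) = (ε² + |y|²)^((1+ε)/2) for y ∈ ℝ^N, with ∇F(y) = (1+ε) y (ε² + |y|²)^((ε−1)/2). Then there exists a universal constant C (independent of ε, y₀, y₁) such that for all y₀, y₁ ∈ ℝ^N, |∇F(y₁) − ∇F(y₀)| ≤ C (ε² + |y₁|² + |y₀|²)^(ε/4) |y₁ − y₀|^(ε/2). -/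
open Set

private lemma le_rpow_half {x c : ℝ} (hx : 0 ≤ x) (hc : 0 ≤ c) (h : x ^ 2 ≤ c) :
    x ≤ c ^ ((1:ℝ)/2) := by
  have h1 : (x ^ 2 : ℝ) ^ ((1:ℝ)/2) ≤ c ^ ((1:ℝ)/2) :=
    Real.rpow_le_rpow (by positivity) h (by norm_num)
  calc x = (x ^ 2 : ℝ) ^ ((1:ℝ)/2) := by
        rw [← Real.rpow_natCast x 2, ← Real.rpow_mul hx]
        norm_num
    _ ≤ c ^ ((1:ℝ)/2) := h1

/-- Term 1 bound: `b^((ε-1)/2) * d ≤ 2 * d^ε` when `d ≤ 2 * b^(1/2)`. -/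
private lemma term1_bound {ε b d : ℝ} (hε0 : 0 < ε) (hε1 : ε < 1) (hb : 0 < b)
    (hd : 0 < d) (hdb : d ≤ 2 * b ^ ((1:ℝ)/2)) :
    b ^ ((ε - 1)/2) * d ≤ 2 * d ^ ε := by
  have hsplit : d ^ (1 - ε) * d ^ ε = d := by
    rw [← Real.rpow_add hd]; norm_num
  have h1 : d ^ (1 - ε) ≤ (2 * b ^ ((1:ℝ)/2)) ^ (1 - ε) :=
    Real.rpow_le_rpow hd.le hdb (by linarith)
  have h2 : (2 * b ^ ((1:ℝ)/2)) ^ (1 - ε) = 2 ^ (1 - ε) * b ^ ((1 - ε)/2) := by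
    rw [Real.mul_rpow (by norm_num) (Real.rpow_nonneg hb.le _),
      ← Real.rpow_mul hb.le]
    ring_nf
  have h3 : b ^ ((ε - 1)/2) * b ^ ((1 - ε)/2) = 1 := by
    rw [← Real.rpow_add hb, show (ε - 1)/2 + (1 - ε)/2 = 0 by ring, Real.rpow_zero]
  have h4 : (2:ℝ) ^ (1 - ε) ≤ 2 := by
    calc (2:ℝ) ^ (1 - ε) ≤ (2:ℝ) ^ (1:ℝ) :=
          Real.rpow_le_rpow_of_exponent_le one_le_two (by linarith)
      _ = 2 := Real.rpow_one 2
  have hdε : (0:ℝ) ≤ d ^ ε := Real.rpow_nonneg hd.le _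
  have hB : (0:ℝ) ≤ b ^ ((ε - 1)/2) := Real.rpow_nonneg hb.le _
  calc b ^ ((ε - 1)/2) * d = b ^ ((ε - 1)/2) * (d ^ (1 - ε) * d ^ ε) := by rw [hsplit]
    _ ≤ b ^ ((ε - 1)/2) * ((2 * b ^ ((1:ℝ)/2)) ^ (1 - ε) * d ^ ε) := by
        apply mul_le_mul_of_nonneg_left (mul_le_mul_of_nonneg_right h1 hdε) hB
    _ = (2:ℝ) ^ (1 - ε) * (b ^ ((ε - 1)/2) * b ^ ((1 - ε)/2)) * d ^ ε := by
        rw [h2]; ring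
    _ = (2:ℝ) ^ (1 - ε) * d ^ ε := by rw [h3]; ring
    _ ≤ 2 * d ^ ε := mul_le_mul_of_nonneg_right h4 hdε

/-- Term 2 bound: `(a^((ε-1)/2) - b^((ε-1)/2)) * n₀ ≤ 2 * (b^((ε-1)/2) * d)`. -/
private lemma term2_bound {ε a b d n₀ : ℝ} (hε0 : 0 < ε) (hε1 : ε < 1)
    (ha : 0 < a) (hab : a ≤ b) (hn₀ : 0 ≤ n₀) (hn₀a : n₀ ≤ a ^ ((1:ℝ)/2))
    (hd : 0 < d) (hba : b - a ≤ 2 * d * b ^ ((1:ℝ)/2)) :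
    (a ^ ((ε - 1)/2) - b ^ ((ε - 1)/2)) * n₀ ≤ 2 * (b ^ ((ε - 1)/2) * d) := by
  have hb : 0 < b := lt_of_lt_of_le ha hab
  -- B = A * (a/b)^((1-ε)/2)
  have hBA : b ^ ((ε - 1)/2) = a ^ ((ε - 1)/2) * (a / b) ^ ((1 - ε)/2) := by
    have e1 : a ^ ((ε - 1)/2) * a ^ ((1 - ε)/2) = 1 := by
      rw [← Real.rpow_add ha, show (ε - 1)/2 + (1 - ε)/2 = 0 by ring, Real.rpow_zero]
    have e2 : b ^ ((ε - 1)/2) * b ^ ((1 - ε)/2) = 1 := by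
      rw [← Real.rpow_add hb, show (ε - 1)/2 + (1 - ε)/2 = 0 by ring, Real.rpow_zero]
    have hbβ : (0:ℝ) < b ^ ((1 - ε)/2) := Real.rpow_pos_of_pos hb _
    rw [Real.div_rpow ha.le hb.le,
      show a ^ ((ε - 1)/2) * (a ^ ((1 - ε)/2) / b ^ ((1 - ε)/2))
        = (a ^ ((ε - 1)/2) * a ^ ((1 - ε)/2)) / b ^ ((1 - ε)/2) by ring,
      e1, eq_div_iff hbβ.ne']
    exact e2
  have ht : a / b ≤ (a / b) ^ ((1 - ε)/2) := by
    have := Real.rpow_le_rpow_of_exponent_ge (div_pos ha hb) ((div_le_one hb).2 hab)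
      (show (1 - ε)/2 ≤ (1:ℝ) by linarith)
    simpa using this
  -- A - B ≤ A * (b-a)/b
  have hAmB : a ^ ((ε - 1)/2) - b ^ ((ε - 1)/2) ≤ a ^ ((ε - 1)/2) * ((b - a)/b) := by
    rw [hBA]
    have hA : (0:ℝ) ≤ a ^ ((ε - 1)/2) := Real.rpow_nonneg ha.le _
    have : 1 - (a / b) ^ ((1 - ε)/2) ≤ 1 - a / b := by linarith
    calc a ^ ((ε - 1)/2) - a ^ ((ε - 1)/2) * (a / b) ^ ((1 - ε)/2)
        = a ^ ((ε - 1)/2) * (1 - (a / b) ^ ((1 - ε)/2)) := by ring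
      _ ≤ a ^ ((ε - 1)/2) * (1 - a / b) := mul_le_mul_of_nonneg_left this hA
      _ = a ^ ((ε - 1)/2) * ((b - a)/b) := by
          congr 1
          field_simp
  have hA : (0:ℝ) ≤ a ^ ((ε - 1)/2) := Real.rpow_nonneg ha.le _
  have hban : (0:ℝ) ≤ (b - a)/b := div_nonneg (by linarith) hb.le
  -- A * a^(1/2) = a^(ε/2) ≤ b^(ε/2)
  have hAa : a ^ ((ε - 1)/2) * a ^ ((1:ℝ)/2) = a ^ (ε/2) := by
    rw [← Real.rpow_add ha]; congr 1; ring
  have haεb : a ^ (ε/2) ≤ b ^ (ε/2) := Real.rpow_le_rpow ha.le hab (by positivity)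
  -- b^(ε/2) * (2*d*b^(1/2))/b = 2 * b^((ε-1)/2) * d
  have hbb : b ^ (ε/2) * (2 * d * b ^ ((1:ℝ)/2)) / b = 2 * (b ^ ((ε - 1)/2) * d) := by
    rw [show b ^ (ε/2) * (2 * d * b ^ ((1:ℝ)/2)) / b
        = 2 * (b ^ (ε/2) * b ^ ((1:ℝ)/2) / b ^ (1:ℝ) * d) by rw [Real.rpow_one]; ring]
    rw [← Real.rpow_add hb, ← Real.rpow_sub hb]
    congr 2
    ring
  calc (a ^ ((ε - 1)/2) - b ^ ((ε - 1)/2)) * n₀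
      ≤ a ^ ((ε - 1)/2) * ((b - a)/b) * n₀ := mul_le_mul_of_nonneg_right hAmB hn₀
    _ ≤ a ^ ((ε - 1)/2) * ((b - a)/b) * a ^ ((1:ℝ)/2) := by
        apply mul_le_mul_of_nonneg_left hn₀a (mul_nonneg hA hban)
    _ = a ^ (ε/2) * ((b - a)/b) := by rw [← hAa]; ring
    _ ≤ b ^ (ε/2) * ((b - a)/b) := mul_le_mul_of_nonneg_right haεb hban
    _ ≤ b ^ (ε/2) * ((2 * d * b ^ ((1:ℝ)/2))/b) := by
        apply mul_le_mul_of_nonneg_left _ (Real.rpow_nonneg hb.le _)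
        gcongr
    _ = b ^ (ε/2) * (2 * d * b ^ ((1:ℝ)/2)) / b := by ring
    _ = 2 * (b ^ ((ε - 1)/2) * d) := hbb

/-- Main auxiliary estimate, assuming `‖y₀‖ ≤ ‖y₁‖` and `y₀ ≠ y₁`. -/
private lemma gradF_holder_aux (N : ℕ) (ε : ℝ) (hε : ε ∈ Ioo (0 : ℝ) 1)
    (y₀ y₁ : EuclideanSpace ℝ (Fin N)) (h01 : ‖y₀‖ ≤ ‖y₁‖) (hd : 0 < ‖y₁ - y₀‖) :
    ‖(((1 + ε) * (ε ^ 2 + ‖y₁‖ ^ 2) ^ ((ε - 1) / 2)) • y₁)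
        - (((1 + ε) * (ε ^ 2 + ‖y₀‖ ^ 2) ^ ((ε - 1) / 2)) • y₀)‖
      ≤ 12 * ‖y₁ - y₀‖ ^ ε := by
  obtain ⟨hε0, hε1⟩ := hε
  set a : ℝ := ε ^ 2 + ‖y₀‖ ^ 2 with ha_def
  set b : ℝ := ε ^ 2 + ‖y₁‖ ^ 2 with hb_def
  set d : ℝ := ‖y₁ - y₀‖ with hd_def
  have ha : 0 < a := by have : 0 < ε ^ 2 := by positivity
                        have : (0:ℝ) ≤ ‖y₀‖ ^ 2 := by positivity
                        simp only [ha_def]; positivity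
  have hb : 0 < b := by simp only [hb_def]; positivity
  have hab : a ≤ b := by
    simp only [ha_def, hb_def]
    have := sq_le_sq' (by linarith [norm_nonneg y₀] : -‖y₁‖ ≤ ‖y₀‖) h01
    nlinarith [norm_nonneg y₀, norm_nonneg y₁]
  have hn1b : ‖y₁‖ ≤ b ^ ((1:ℝ)/2) := le_rpow_half (norm_nonneg _) hb.le (by simp [hb_def]; nlinarith)
  have hn0a : ‖y₀‖ ≤ a ^ ((1:ℝ)/2) := le_rpow_half (norm_nonneg _) ha.le (by simp [ha_def]; nlinarith)
  have hd2b : d ≤ 2 * b ^ ((1:ℝ)/2) := by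
    have h1 : d ≤ ‖y₁‖ + ‖y₀‖ := norm_sub_le _ _
    linarith
  have hba : b - a ≤ 2 * d * b ^ ((1:ℝ)/2) := by
    have h1 : ‖y₁‖ - ‖y₀‖ ≤ d := norm_sub_norm_le _ _
    have h2 : b - a = (‖y₁‖ - ‖y₀‖) * (‖y₁‖ + ‖y₀‖) := by simp only [ha_def, hb_def]; ring
    have h3 : ‖y₁‖ + ‖y₀‖ ≤ 2 * b ^ ((1:ℝ)/2) := by linarith
    have h4 : (0:ℝ) ≤ ‖y₁‖ - ‖y₀‖ := by linarith
    calc b - a = (‖y₁‖ - ‖y₀‖) * (‖y₁‖ + ‖y₀‖) := h2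
      _ ≤ d * (2 * b ^ ((1:ℝ)/2)) := mul_le_mul h1 h3 (by positivity) hd.le
      _ = 2 * d * b ^ ((1:ℝ)/2) := by ring
  set A : ℝ := a ^ ((ε - 1)/2) with hA_def
  set B : ℝ := b ^ ((ε - 1)/2) with hB_def
  have hBA : B ≤ A := Real.rpow_le_rpow_of_nonpos ha hab (by linarith)
  have hAnn : 0 ≤ A := Real.rpow_nonneg ha.le _
  have hBnn : 0 ≤ B := Real.rpow_nonneg hb.le _
  have hsplit : ((1 + ε) * B) • y₁ - ((1 + ε) * A) • y₀
      = ((1 + ε) * B) • (y₁ - y₀) + ((1 + ε) * (B - A)) • y₀ := by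
    module
  have hnorm : ‖((1 + ε) * B) • y₁ - ((1 + ε) * A) • y₀‖
      ≤ (1 + ε) * (B * d) + (1 + ε) * ((A - B) * ‖y₀‖) := by
    rw [hsplit]
    refine (norm_add_le _ _).trans ?_
    rw [norm_smul, norm_smul, Real.norm_eq_abs, Real.norm_eq_abs]
    have e1 : |(1 + ε) * B| = (1 + ε) * B := abs_of_nonneg (by positivity)
    have e2 : |(1 + ε) * (B - A)| = (1 + ε) * (A - B) := by
      rw [abs_mul, abs_of_nonneg (by linarith : (0:ℝ) ≤ 1 + ε), abs_of_nonpos (by linarith)]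
      ring
    rw [e1, e2]
    ring_nf
    nlinarith [norm_nonneg y₀, hd.le]
  have hterm1 : B * d ≤ 2 * d ^ ε := term1_bound hε0 hε1 hb hd hd2b
  have hterm2 : (A - B) * ‖y₀‖ ≤ 2 * (B * d) :=
    term2_bound hε0 hε1 ha hab (norm_nonneg _) hn0a hd hba
  have hBd : 0 ≤ B * d := mul_nonneg hBnn hd.le
  calc ‖((1 + ε) * B) • y₁ - ((1 + ε) * A) • y₀‖
      ≤ (1 + ε) * (B * d) + (1 + ε) * ((A - B) * ‖y₀‖) := hnorm
    _ ≤ 2 * (B * d) + 2 * (2 * (B * d)) := by nlinarith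
    _ = 6 * (B * d) := by ring
    _ ≤ 6 * (2 * d ^ ε) := by linarith
    _ = 12 * d ^ ε := by ring

/-- Hölder continuity of the gradient `∇F y = (1+ε) (ε² + ‖y‖²)^((ε-1)/2) • y`
of `F y = (ε² + ‖y‖²)^((1+ε)/2)`, with a constant independent of `ε`, `y₀`, `y₁`. -/
theorem gradF_holder (N : ℕ) :
    ∃ C : ℝ, 0 < C ∧ ∀ ε : ℝ, ε ∈ Ioo (0 : ℝ) 1 →
      ∀ y₀ y₁ : EuclideanSpace ℝ (Fin N),
      ‖(((1 + ε) * (ε ^ 2 + ‖y₁‖ ^ 2) ^ ((ε - 1) / 2)) • y₁)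
        - (((1 + ε) * (ε ^ 2 + ‖y₀‖ ^ 2) ^ ((ε - 1) / 2)) • y₀)‖
      ≤ C * (ε ^ 2 + ‖y₁‖ ^ 2 + ‖y₀‖ ^ 2) ^ (ε / 4) * ‖y₁ - y₀‖ ^ (ε / 2) := by
  refine ⟨24, by norm_num, ?_⟩
  intro ε hε y₀ y₁
  obtain ⟨hε0, hε1⟩ := hε
  set M : ℝ := ε ^ 2 + ‖y₁‖ ^ 2 + ‖y₀‖ ^ 2 with hM_def
  have hM : 0 < M := by simp only [hM_def]; positivity
  rcases eq_or_lt_of_le (norm_nonneg (y₁ - y₀)) with hd0 | hd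
  · -- y₁ = y₀
    have hy : y₁ = y₀ := norm_sub_eq_zero_iff.mp hd0.symm
    subst hy
    simp [Real.zero_rpow (show ε/2 ≠ 0 by positivity)]
  · -- main case
    set d : ℝ := ‖y₁ - y₀‖ with hd_def
    have key : ‖(((1 + ε) * (ε ^ 2 + ‖y₁‖ ^ 2) ^ ((ε - 1) / 2)) • y₁)
        - (((1 + ε) * (ε ^ 2 + ‖y₀‖ ^ 2) ^ ((ε - 1) / 2)) • y₀)‖ ≤ 12 * d ^ ε := by
      rcases le_total ‖y₀‖ ‖y₁‖ with h01 | h10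
      · exact gradF_holder_aux N ε ⟨hε0, hε1⟩ y₀ y₁ h01 hd
      · have hd' : 0 < ‖y₀ - y₁‖ := by rwa [norm_sub_rev]
        have := gradF_holder_aux N ε ⟨hε0, hε1⟩ y₁ y₀ h10 hd'
        calc ‖(((1 + ε) * (ε ^ 2 + ‖y₁‖ ^ 2) ^ ((ε - 1) / 2)) • y₁)
            - (((1 + ε) * (ε ^ 2 + ‖y₀‖ ^ 2) ^ ((ε - 1) / 2)) • y₀)‖
            = ‖(((1 + ε) * (ε ^ 2 + ‖y₀‖ ^ 2) ^ ((ε - 1) / 2)) • y₀)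
            - (((1 + ε) * (ε ^ 2 + ‖y₁‖ ^ 2) ^ ((ε - 1) / 2)) • y₁)‖ := norm_sub_rev _ _
          _ ≤ 12 * ‖y₀ - y₁‖ ^ ε := this
          _ = 12 * d ^ ε := by rw [norm_sub_rev y₀ y₁]
    -- now convert d^ε ≤ 2 * M^(ε/4) * d^(ε/2)
    have hdM : d ≤ 2 * M ^ ((1:ℝ)/2) := by
      have h1 : d ≤ ‖y₁‖ + ‖y₀‖ := norm_sub_le _ _
      have h2 : ‖y₁‖ ≤ M ^ ((1:ℝ)/2) := le_rpow_half (norm_nonneg _) hM.le (by nlinarith [norm_nonneg y₀, sq_nonneg ε])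
      have h3 : ‖y₀‖ ≤ M ^ ((1:ℝ)/2) := le_rpow_half (norm_nonneg _) hM.le (by nlinarith [norm_nonneg y₁, sq_nonneg ε])
      linarith
    have hconv : d ^ ε ≤ 2 * M ^ (ε/4) * d ^ (ε/2) := by
      have hsplit : d ^ ε = d ^ (ε/2) * d ^ (ε/2) := by
        rw [← Real.rpow_add hd]; norm_num
      have h1 : d ^ (ε/2) ≤ (2 * M ^ ((1:ℝ)/2)) ^ (ε/2) :=
        Real.rpow_le_rpow hd.le hdM (by positivity)
      have h2 : (2 * M ^ ((1:ℝ)/2)) ^ (ε/2) = 2 ^ (ε/2) * M ^ (ε/4) := by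
        rw [Real.mul_rpow (by norm_num) (Real.rpow_nonneg hM.le _), ← Real.rpow_mul hM.le]
        ring_nf
      have h3 : (2:ℝ) ^ (ε/2) ≤ 2 := by
        calc (2:ℝ) ^ (ε/2) ≤ (2:ℝ) ^ (1:ℝ) :=
              Real.rpow_le_rpow_of_exponent_le one_le_two (by linarith)
          _ = 2 := Real.rpow_one 2
      have hd2 : (0:ℝ) ≤ d ^ (ε/2) := Real.rpow_nonneg hd.le _
      have hM4 : (0:ℝ) ≤ M ^ (ε/4) := Real.rpow_nonneg hM.le _
      calc d ^ ε = d ^ (ε/2) * d ^ (ε/2) := hsplit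
        _ ≤ (2 ^ (ε/2) * M ^ (ε/4)) * d ^ (ε/2) := by
            rw [← h2]; exact mul_le_mul_of_nonneg_right h1 hd2
        _ ≤ (2 * M ^ (ε/4)) * d ^ (ε/2) := by
            apply mul_le_mul_of_nonneg_right (mul_le_mul_of_nonneg_right h3 hM4) hd2
        _ = 2 * M ^ (ε/4) * d ^ (ε/2) := by ring
    calc ‖(((1 + ε) * (ε ^ 2 + ‖y₁‖ ^ 2) ^ ((ε - 1) / 2)) • y₁)
        - (((1 + ε) * (ε ^ 2 + ‖y₀‖ ^ 2) ^ ((ε - 1) / 2)) • y₀)‖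
        ≤ 12 * d ^ ε := key
      _ ≤ 12 * (2 * M ^ (ε/4) * d ^ (ε/2)) := by linarith
      _ = 24 * M ^ (ε/4) * d ^ (ε/2) := by ring
end

section
/- Let ε ∈ (0,1) and let u, v : S¹ → ℝ^N be W^{1,1+ε} maps. Define L_ε(w) = ∫_{S¹} [(ε² + |w'|²)^((1+ε)/2) − ε^{1+ε}] dθ. Then there is a universal constant A₀ such that |L_ε(u) − L_ε(v)| ≤ A₀ (‖u'‖_{L^{1+ε}} + ‖v'‖_{L^{1+ε}})^{(1+ε)/2} ‖u − v‖_{W^{1,1+ε}}^{(1+ε)/2}. -/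
open Set Real MeasureTheory

/-!
For `p = 1 + ε ≤ 2` the map `t ↦ t ^ (p / 2)` is `(p / 2)`-Hölder with constant one on `[0, ∞)`,
so the two integrands differ pointwise by at most
`|‖u'‖² - ‖v'‖²| ^ (p / 2) ≤ (‖u'‖ + ‖v'‖) ^ (p / 2) ‖u' - v'‖ ^ (p / 2)`.
After integrating, Cauchy–Schwarz splits this into
`(∫ (‖u'‖ + ‖v'‖) ^ p) ^ (1 / 2) (∫ ‖u' - v'‖ ^ p) ^ (1 / 2)`, and Minkowski's inequality
bounds the first factor by `(‖u'‖_p + ‖v'‖_p) ^ (p / 2)`. Hence `A₀ = 1` works.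
-/

namespace Real

lemma abs_rpow_sub_rpow_le_abs_sub_rpow {x y p : ℝ} (hx : 0 ≤ x) (hy : 0 ≤ y) (hp0 : 0 ≤ p)
    (hp1 : p ≤ 1) : |x ^ p - y ^ p| ≤ |x - y| ^ p := by
  wlog hyx : y ≤ x generalizing x y
  · rw [abs_sub_comm, abs_sub_comm x]
    exact this hy hx (le_of_not_ge hyx)
  have hsub : x ^ p ≤ (x - y) ^ p + y ^ p := by
    simpa using rpow_add_le_add_rpow (sub_nonneg.2 hyx) hy hp0 hp1
  have hmono : y ^ p ≤ x ^ p := rpow_le_rpow hy hyx hp0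
  rw [abs_of_nonneg (sub_nonneg.2 hmono), abs_of_nonneg (sub_nonneg.2 hyx)]
  linarith

end Real

section Pointwise

variable {E : Type*} [SeminormedAddCommGroup E]

lemma abs_add_norm_sq_rpow_sub_le {c p : ℝ} (hc : 0 ≤ c) (hp0 : 0 ≤ p) (hp2 : p ≤ 2)
    (x y : E) :
    |(c + ‖x‖ ^ 2) ^ (p / 2) - (c + ‖y‖ ^ 2) ^ (p / 2)|
      ≤ (‖x‖ + ‖y‖) ^ (p / 2) * ‖x - y‖ ^ (p / 2) := by
  have hsq : |‖x‖ ^ 2 - ‖y‖ ^ 2| ≤ (‖x‖ + ‖y‖) * ‖x - y‖ := by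
    rw [sq_sub_sq, abs_mul, abs_of_nonneg (by positivity)]
    exact mul_le_mul_of_nonneg_left (abs_norm_sub_norm_le x y) (by positivity)
  calc |(c + ‖x‖ ^ 2) ^ (p / 2) - (c + ‖y‖ ^ 2) ^ (p / 2)|
      ≤ |‖x‖ ^ 2 - ‖y‖ ^ 2| ^ (p / 2) := by
        simpa using Real.abs_rpow_sub_rpow_le_abs_sub_rpow (by positivity : 0 ≤ c + ‖x‖ ^ 2)
          (by positivity : 0 ≤ c + ‖y‖ ^ 2) (by linarith) (by linarith)
    _ ≤ ((‖x‖ + ‖y‖) * ‖x - y‖) ^ (p / 2) := by gcongr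
    _ = (‖x‖ + ‖y‖) ^ (p / 2) * ‖x - y‖ ^ (p / 2) :=
        Real.mul_rpow (by positivity) (by positivity)

lemma abs_sq_add_norm_sq_rpow_sub_le_norm_rpow {c p : ℝ} (hc : 0 ≤ c) (hp0 : 0 ≤ p)
    (hp2 : p ≤ 2) (x : E) :
    |(c ^ 2 + ‖x‖ ^ 2) ^ (p / 2) - c ^ p| ≤ ‖x‖ ^ p := by
  have hsq : ∀ {t : ℝ}, 0 ≤ t → (t ^ 2) ^ (p / 2) = t ^ p := fun ht => by
    rw [← Real.rpow_natCast, ← Real.rpow_mul ht]; ring_nf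
  simpa [hsq hc, hsq (norm_nonneg x)] using Real.abs_rpow_sub_rpow_le_abs_sub_rpow
    (by positivity : 0 ≤ c ^ 2 + ‖x‖ ^ 2) (sq_nonneg c) (by linarith : 0 ≤ p / 2) (by linarith)

end Pointwise

namespace MeasureTheory

variable {α E : Type*} [MeasurableSpace α] {μ : Measure α} [NormedAddCommGroup E] {p : ℝ}

lemma MemLp.integrable_norm_rpow_ofReal {f : α → E} (hp : 0 < p)
    (hf : MemLp f (ENNReal.ofReal p) μ) : Integrable (fun x => ‖f x‖ ^ p) μ := by
  simpa [hp.le] using hf.integrable_norm_rpow (by simpa using hp) ENNReal.ofReal_ne_top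

lemma MemLp.rpow_half {f : α → ℝ} (hf0 : ∀ x, 0 ≤ f x) (hp : 0 < p)
    (hf : MemLp f (ENNReal.ofReal p) μ) : MemLp (fun x => f x ^ (p / 2)) 2 μ := by
  have h := hf.norm_rpow_div (ENNReal.ofReal (p / 2))
  rw [← ENNReal.ofReal_div_of_pos (by positivity), ENNReal.toReal_ofReal (by positivity),
    div_div_cancel₀ hp.ne', ENNReal.ofReal_ofNat] at h
  simpa only [Real.norm_of_nonneg (hf0 _)] using h

lemma MemLp.integrable_sq_add_norm_sq_rpow_sub {f : α → E} {c : ℝ} (hc : 0 ≤ c) (hp : 0 < p)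
    (hp2 : p ≤ 2) (hf : MemLp f (ENNReal.ofReal p) μ) :
    Integrable (fun x => (c ^ 2 + ‖f x‖ ^ 2) ^ (p / 2) - c ^ p) μ := by
  have hcont : Continuous fun y : E => (c ^ 2 + ‖y‖ ^ 2) ^ (p / 2) - c ^ p := by
    fun_prop (disch := positivity)
  refine (hf.integrable_norm_rpow_ofReal hp).mono' (hcont.comp_aestronglyMeasurable hf.1)
    (ae_of_all _ fun x => ?_)
  exact abs_sq_add_norm_sq_rpow_sub_le_norm_rpow hc hp.le hp2 (f x)

theorem integral_rpow_half_mul_le {f g : α → ℝ} (hf0 : ∀ x, 0 ≤ f x) (hg0 : ∀ x, 0 ≤ g x)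
    (hp : 0 < p) (hf : MemLp f (ENNReal.ofReal p) μ) (hg : MemLp g (ENNReal.ofReal p) μ) :
    ∫ x, f x ^ (p / 2) * g x ^ (p / 2) ∂μ
      ≤ (∫ x, f x ^ p ∂μ) ^ (1 / 2 : ℝ) * (∫ x, g x ^ p ∂μ) ^ (1 / 2 : ℝ) := by
  have hsq : ∀ {t : ℝ}, 0 ≤ t → (t ^ (p / 2)) ^ (2 : ℝ) = t ^ p := fun ht => by
    rw [← Real.rpow_mul ht]; ring_nf
  simpa only [hsq (hf0 _), hsq (hg0 _)] using
    integral_mul_le_Lp_mul_Lq_of_nonneg (f := fun x => f x ^ (p / 2))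
      (g := fun x => g x ^ (p / 2)) Real.HolderConjugate.two_two
      (ae_of_all _ fun x => rpow_nonneg (hf0 x) _)
      (ae_of_all _ fun x => rpow_nonneg (hg0 x) _)
      (by simpa using hf.rpow_half hf0 hp) (by simpa using hg.rpow_half hg0 hp)

theorem integral_norm_add_norm_rpow_le {f g : α → E} (hp : 1 ≤ p)
    (hf : MemLp f (ENNReal.ofReal p) μ) (hg : MemLp g (ENNReal.ofReal p) μ) :
    (∫ x, (‖f x‖ + ‖g x‖) ^ p ∂μ) ^ (1 / p)
      ≤ (∫ x, ‖f x‖ ^ p ∂μ) ^ (1 / p) + (∫ x, ‖g x‖ ^ p ∂μ) ^ (1 / p) := by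
  have hp0 : ENNReal.ofReal p ≠ 0 := by simp; linarith
  have h := lpNorm_add_le hf.norm (g := fun x => ‖g x‖) (ENNReal.one_le_ofReal.2 hp)
  rw [lpNorm_eq_integral_norm_rpow_toReal hp0 ENNReal.ofReal_ne_top (hf.norm.add hg.norm).1,
    lpNorm_norm hf.1, lpNorm_norm hg.1,
    lpNorm_eq_integral_norm_rpow_toReal hp0 ENNReal.ofReal_ne_top hf.1,
    lpNorm_eq_integral_norm_rpow_toReal hp0 ENNReal.ofReal_ne_top hg.1] at h
  simpa [ENNReal.toReal_ofReal (by linarith : 0 ≤ p), abs_of_nonneg, add_nonneg] using h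

theorem abs_integral_sq_add_norm_sq_rpow_sub_le {f g : α → E} {c : ℝ} (hc : 0 ≤ c)
    (hp1 : 1 ≤ p) (hp2 : p ≤ 2) (hf : MemLp f (ENNReal.ofReal p) μ)
    (hg : MemLp g (ENNReal.ofReal p) μ) :
    |(∫ x, ((c ^ 2 + ‖f x‖ ^ 2) ^ (p / 2) - c ^ p) ∂μ)
        - ∫ x, ((c ^ 2 + ‖g x‖ ^ 2) ^ (p / 2) - c ^ p) ∂μ|
      ≤ ((∫ x, ‖f x‖ ^ p ∂μ) ^ (1 / p) + (∫ x, ‖g x‖ ^ p ∂μ) ^ (1 / p)) ^ (p / 2)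
        * (∫ x, ‖f x - g x‖ ^ p ∂μ) ^ (1 / 2 : ℝ) := by
  have hp : 0 < p := by linarith
  have hsum : MemLp (fun x => ‖f x‖ + ‖g x‖) (ENNReal.ofReal p) μ := hf.norm.add hg.norm
  have hdiff : MemLp (fun x => ‖f x - g x‖) (ENNReal.ofReal p) μ := (hf.sub hg).norm
  have hprod : Integrable (fun x => (‖f x‖ + ‖g x‖) ^ (p / 2) * ‖f x - g x‖ ^ (p / 2)) μ :=
    (hsum.rpow_half (fun x => by positivity) hp).integrable_mul
      (hdiff.rpow_half (fun x => norm_nonneg _) hp)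
  have hpow : (∫ x, (‖f x‖ + ‖g x‖) ^ p ∂μ) ^ (1 / 2 : ℝ)
      = ((∫ x, (‖f x‖ + ‖g x‖) ^ p ∂μ) ^ (1 / p)) ^ (p / 2) := by
    rw [← rpow_mul (integral_nonneg fun x => by positivity)]
    field_simp
  calc _ = |∫ x, ((c ^ 2 + ‖f x‖ ^ 2) ^ (p / 2) - (c ^ 2 + ‖g x‖ ^ 2) ^ (p / 2)) ∂μ| := by
        rw [← integral_sub (hf.integrable_sq_add_norm_sq_rpow_sub hc hp hp2)
          (hg.integrable_sq_add_norm_sq_rpow_sub hc hp hp2)]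
        simp only [sub_sub_sub_cancel_right]
    _ ≤ ∫ x, |(c ^ 2 + ‖f x‖ ^ 2) ^ (p / 2) - (c ^ 2 + ‖g x‖ ^ 2) ^ (p / 2)| ∂μ :=
        abs_integral_le_integral_abs
    _ ≤ ∫ x, (‖f x‖ + ‖g x‖) ^ (p / 2) * ‖f x - g x‖ ^ (p / 2) ∂μ :=
        integral_mono_of_nonneg (ae_of_all _ fun x => abs_nonneg _) hprod
          (ae_of_all _ fun x =>
            abs_add_norm_sq_rpow_sub_le (sq_nonneg c) hp.le hp2 (f x) (g x))
    _ ≤ (∫ x, (‖f x‖ + ‖g x‖) ^ p ∂μ) ^ (1 / 2 : ℝ)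
          * (∫ x, ‖f x - g x‖ ^ p ∂μ) ^ (1 / 2 : ℝ) :=
        integral_rpow_half_mul_le (fun x => by positivity) (fun x => norm_nonneg _) hp hsum hdiff
    _ ≤ _ := by
        rw [hpow]
        gcongr
        exact integral_norm_add_norm_rpow_le hp1 hf hg

lemma memLp_of_hasDerivAt {F : Type*} [NormedAddCommGroup F] [NormedSpace ℝ F]
    [CompleteSpace F] {μ : Measure ℝ} {f g : ℝ → F} (hf : ∀ x, HasDerivAt f (g x) x) (hp : 0 < p)
    (hg : Integrable (fun x => ‖g x‖ ^ p) μ) : MemLp g (ENNReal.ofReal p) μ := by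
  have hmeas : AEStronglyMeasurable g μ := by
    simpa only [funext fun x => (hf x).deriv] using aestronglyMeasurable_deriv f μ
  rw [← integrable_norm_rpow_iff hmeas (by simpa using hp) ENNReal.ofReal_ne_top]
  simpa [hp.le] using hg

end MeasureTheory

/-- Continuity estimate for the regularized length functional `L_ε` on
`W^{1,1+ε}(S¹; ℝ^N)` (the circle identified with `[0, 2π]`), where `gu`, `gv` are
the derivatives of `u`, `v`:
`|L_ε(u) − L_ε(v)| ≤ A₀ (‖u'‖_{1+ε} + ‖v'‖_{1+ε})^{(1+ε)/2} ‖u − v‖_{1,1+ε}^{(1+ε)/2}`. -/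
theorem regularized_length_continuity :
    ∃ A₀ : ℝ, 0 < A₀ ∧ ∀ (N : ℕ) (ε : ℝ), ε ∈ Ioo (0 : ℝ) 1 →
      ∀ u v gu gv : ℝ → EuclideanSpace ℝ (Fin N),
        (∀ θ, HasDerivAt u (gu θ) θ) →
        (∀ θ, HasDerivAt v (gv θ) θ) →
        IntervalIntegrable (fun θ => ‖gu θ‖ ^ (1 + ε)) volume 0 (2 * π) →
        IntervalIntegrable (fun θ => ‖gv θ‖ ^ (1 + ε)) volume 0 (2 * π) →
        |(∫ θ in (0 : ℝ)..(2 * π),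
            ((ε ^ 2 + ‖gu θ‖ ^ 2) ^ ((1 + ε) / 2) - ε ^ (1 + ε)))
          - ∫ θ in (0 : ℝ)..(2 * π),
            ((ε ^ 2 + ‖gv θ‖ ^ 2) ^ ((1 + ε) / 2) - ε ^ (1 + ε))|
        ≤ A₀ *
          ((∫ θ in (0 : ℝ)..(2 * π), ‖gu θ‖ ^ (1 + ε)) ^ (1 / (1 + ε))
            + (∫ θ in (0 : ℝ)..(2 * π), ‖gv θ‖ ^ (1 + ε)) ^ (1 / (1 + ε)))
            ^ ((1 + ε) / 2) *
          ((∫ θ in (0 : ℝ)..(2 * π),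
              (‖u θ - v θ‖ ^ (1 + ε) + ‖gu θ - gv θ‖ ^ (1 + ε)))
            ^ (1 / (1 + ε))) ^ ((1 + ε) / 2) := by
  refine ⟨1, one_pos, ?_⟩
  rintro N ε ⟨hε0, hε1⟩ u v gu gv hu hv hgu hgv
  have h2π : 0 ≤ 2 * π := by positivity
  have hp : 0 < 1 + ε := by linarith
  simp only [intervalIntegral.integral_of_le h2π]
  rw [intervalIntegrable_iff_integrableOn_Ioc_of_le h2π] at hgu hgv
  have hu' := memLp_of_hasDerivAt hu hp hgu
  have hv' := memLp_of_hasDerivAt hv hp hgv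
  have hcont : Continuous fun θ => ‖u θ - v θ‖ ^ (1 + ε) :=
    ((Differentiable.continuous fun θ => (hu θ).differentiableAt).sub
      (Differentiable.continuous fun θ => (hv θ).differentiableAt)).norm.rpow_const
      fun _ => Or.inr hp.le
  have hderiv_le : ∫ θ in Ioc 0 (2 * π), ‖gu θ - gv θ‖ ^ (1 + ε)
      ≤ ∫ θ in Ioc 0 (2 * π), (‖u θ - v θ‖ ^ (1 + ε) + ‖gu θ - gv θ‖ ^ (1 + ε)) := by
    have hdiff := (hu'.sub hv').integrable_norm_rpow_ofReal hp
    exact integral_mono hdiff (hcont.integrableOn_Ioc.add hdiff)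
      fun θ => le_add_of_nonneg_left (by positivity)
  calc _ ≤ _ :=
        abs_integral_sq_add_norm_sq_rpow_sub_le hε0.le (by linarith) (by linarith) hu' hv'
    _ ≤ _ := by
      rw [one_mul, ← rpow_mul (integral_nonneg fun θ => by positivity),
        show 1 / (1 + ε) * ((1 + ε) / 2) = 1 / 2 by field_simp]
      gcongr
end

section
/- Let ε ∈ (0,1) and suppose u : S¹ → ℝ^N is absolutely continuous with ∫_{S¹}[(ε² + |u'|²)^((1+ε)/2) − ε^{1+ε}] dθ ≤ α for some α > 0. Then for any point c in the image of u, ‖u − c‖_{C⁰} ≤ A₀(ε + α^{1/(1+ε)}), where A₀ is a universal constant. -/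
open Set Real MeasureTheory

/-- Oscillation bound: an absolutely continuous `2π`-periodic curve `u` with derivative `g`
and regularized length `L_ε(u) ≤ α` stays within distance `A₀(ε + α^{1/(1+ε)})` of any
point `c` on its image, with `A₀` universal. -/
theorem oscillation_bound :
    ∃ A₀ : ℝ, 0 < A₀ ∧ ∀ (N : ℕ) (ε α : ℝ), ε ∈ Ioo (0 : ℝ) 1 → 0 < α →
      ∀ u g : ℝ → EuclideanSpace ℝ (Fin N),
        Function.Periodic u (2 * π) →
        (∀ x y : ℝ, u y - u x = ∫ t in x..y, g t) →
        IntervalIntegrable (fun θ => (ε ^ 2 + ‖g θ‖ ^ 2) ^ ((1 + ε) / 2))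
          volume 0 (2 * π) →
        (∫ θ in (0 : ℝ)..(2 * π),
            ((ε ^ 2 + ‖g θ‖ ^ 2) ^ ((1 + ε) / 2) - ε ^ (1 + ε))) ≤ α →
        ∀ c : EuclideanSpace ℝ (Fin N), (∃ θ₀ : ℝ, u θ₀ = c) →
          ∀ θ : ℝ, ‖u θ - c‖ ≤ A₀ * (ε + α ^ (1 / (1 + ε))) := by
  refine ⟨4 * π + 1, by positivity, ?_⟩
  rintro N ε α ⟨hε0, hε1⟩ hα u g hper hdiff hint hL c ⟨θ₀, hc⟩ θ
  have hπ : (0 : ℝ) < π := pi_pos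
  set q : ℝ := α ^ (1 / (1 + ε)) with hq
  have hq0 : 0 < q := rpow_pos_of_pos hα _
  set lam : ℝ := ε + q with hlam
  have hlam0 : 0 < lam := by positivity
  set h : ℝ → ℝ := fun θ => (ε ^ 2 + ‖g θ‖ ^ 2) ^ ((1 + ε) / 2) with hh
  have hhnn : ∀ t, 0 ≤ h t := fun t => rpow_nonneg (by positivity) _
  set φ : ℝ → ℝ := fun t => lam + h t / lam ^ ε with hφ
  have hφnn : ∀ t, 0 ≤ φ t := by
    intro t
    have : 0 ≤ h t / lam ^ ε := div_nonneg (hhnn t) (rpow_nonneg hlam0.le _)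
    simp only [hφ]; linarith
  -- pointwise bound ‖g t‖ ≤ φ t
  have hptwise : ∀ t, ‖g t‖ ≤ φ t := by
    intro t
    rcases le_or_gt ‖g t‖ lam with hle | hlt
    · have : 0 ≤ h t / lam ^ ε := div_nonneg (hhnn t) (rpow_nonneg hlam0.le _)
      simp only [hφ]; linarith
    · have hg0 : 0 < ‖g t‖ := hlam0.trans hlt
      have h1 : ‖g t‖ ^ ((1 : ℝ) + ε) ≤ h t := by
        have hb : ‖g t‖ ^ 2 ≤ ε ^ 2 + ‖g t‖ ^ 2 :=
          le_add_of_nonneg_left (by positivity)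
        have h2 := rpow_le_rpow (by positivity) hb
          (by positivity : (0:ℝ) ≤ (1 + ε) / 2)
        have h3 : ((‖g t‖ ^ 2 : ℝ)) ^ ((1 + ε)/2) = ‖g t‖ ^ ((1:ℝ) + ε) := by
          rw [← rpow_natCast ‖g t‖ 2, ← rpow_mul (norm_nonneg _)]
          congr 1
          push_cast
          ring
        rw [← h3]; exact h2
      have h2 : ‖g t‖ * lam ^ ε ≤ ‖g t‖ ^ ((1:ℝ) + ε) := by
        rw [rpow_add hg0, rpow_one]
        exact mul_le_mul_of_nonneg_left (rpow_le_rpow hlam0.le hlt.le hε0.le)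
          (norm_nonneg _)
      have hlε : (0:ℝ) < lam ^ ε := rpow_pos_of_pos hlam0 _
      have h3 : ‖g t‖ ≤ h t / lam ^ ε := by
        rw [le_div_iff₀ hlε]; exact h2.trans h1
      simp only [hφ]; linarith
  -- integrability of φ on [0, 2π]
  have hφint : IntervalIntegrable φ volume 0 (2 * π) :=
    (intervalIntegrable_const (c := lam)).add (hint.div_const _)
  -- ∫ h over [0,2π] bound
  have hhint_bound : (∫ t in (0:ℝ)..(2*π), h t) ≤ α + 2 * π * ε ^ ((1:ℝ) + ε) := by
    have hsplit : (∫ t in (0:ℝ)..(2*π), (h t - ε ^ ((1:ℝ) + ε)))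
        = (∫ t in (0:ℝ)..(2*π), h t) - (2 * π) * ε ^ ((1:ℝ)+ε) := by
      rw [intervalIntegral.integral_sub hint intervalIntegrable_const,
        intervalIntegral.integral_const]
      simp [smul_eq_mul]
    have hL' : (∫ t in (0:ℝ)..(2*π), (h t - ε ^ ((1:ℝ)+ε))) ≤ α := hL
    linarith [hsplit ▸ hL']
  -- ∫ φ over [0, 2π] bound
  have hφ_bound : (∫ t in (0:ℝ)..(2*π), φ t) ≤ (4 * π + 1) * (ε + q) := by
    have heq : (∫ t in (0:ℝ)..(2*π), φ t)
        = 2 * π * lam + (∫ t in (0:ℝ)..(2*π), h t) / lam ^ ε := by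
      rw [hφ]
      rw [intervalIntegral.integral_add (intervalIntegrable_const (c := lam))
        (hint.div_const _), intervalIntegral.integral_const]
      simp only [smul_eq_mul, sub_zero]
      rw [intervalIntegral.integral_div]
    have hlε : (0:ℝ) < lam ^ ε := rpow_pos_of_pos hlam0 _
    have hαq : α / lam ^ ε ≤ q := by
      have hqε : q ^ ε ≤ lam ^ ε :=
        rpow_le_rpow hq0.le (by rw [hlam]; linarith) hε0.le
      have hαeq : α = q * q ^ ε := by
        rw [hq, ← rpow_mul hα.le, ← rpow_add hα]
        rw [show 1 / (1 + ε) + 1 / (1 + ε) * ε = 1 by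
          have h1ε : (1:ℝ) + ε ≠ 0 := by positivity
          field_simp]
        exact (rpow_one α).symm
      rw [div_le_iff₀ hlε, hαeq]
      exact mul_le_mul_of_nonneg_left hqε hq0.le
    have hεq : ε ^ ((1:ℝ)+ε) / lam ^ ε ≤ ε := by
      have hεε : ε ^ ε ≤ lam ^ ε :=
        rpow_le_rpow hε0.le (by rw [hlam]; linarith) hε0.le
      rw [div_le_iff₀ hlε, rpow_add hε0, rpow_one]
      exact mul_le_mul_of_nonneg_left hεε hε0.le
    have hdiv : (∫ t in (0:ℝ)..(2*π), h t) / lam ^ ε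
        ≤ α / lam ^ ε + 2 * π * (ε ^ ((1:ℝ)+ε) / lam ^ ε) := by
      rw [← mul_div_assoc, ← add_div]
      gcongr
    rw [heq, hlam]
    nlinarith [hπ, hq0, hε0, hαq, hεq, hdiv]
  -- reduce to the fundamental interval
  set a : ℝ := θ₀ - (⌊θ₀ / (2*π)⌋ : ℝ) * (2*π) with ha
  set b : ℝ := θ - (⌊θ / (2*π)⌋ : ℝ) * (2*π) with hb
  have hbounds : ∀ x : ℝ, 0 ≤ x - (⌊x / (2*π)⌋ : ℝ) * (2*π)
      ∧ x - (⌊x / (2*π)⌋ : ℝ) * (2*π) ≤ 2*π := by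
    intro x
    have e1 : (⌊x/(2*π)⌋:ℝ) * (2*π) ≤ x :=
      (le_div_iff₀ (by positivity : (0:ℝ) < 2*π)).mp (Int.floor_le _)
    have e2 : x < ((⌊x/(2*π)⌋:ℝ) + 1) * (2*π) :=
      (div_lt_iff₀ (by positivity : (0:ℝ) < 2*π)).mp (Int.lt_floor_add_one _)
    constructor <;> nlinarith
  have ha0 : 0 ≤ a := (hbounds θ₀).1
  have ha2 : a ≤ 2*π := (hbounds θ₀).2
  have hb0 : 0 ≤ b := (hbounds θ).1
  have hb2 : b ≤ 2*π := (hbounds θ).2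
  have hua : u a = c := by rw [ha, hper.sub_int_mul_eq]; exact hc
  have hub : u b = u θ := by rw [hb, hper.sub_int_mul_eq]
  have hkey : u θ - c = ∫ t in a..b, g t := by
    rw [← hua, ← hub]; exact hdiff a b
  by_cases hgi : IntervalIntegrable g volume a b
  · have hsub : uIcc a b ⊆ uIcc (0:ℝ) (2*π) := by
      rw [uIcc_of_le (by positivity : (0:ℝ) ≤ 2*π)]
      intro x hx
      rcases le_total a b with hab | hab
      · rw [uIcc_of_le hab] at hx
        exact ⟨le_trans ha0 hx.1, le_trans hx.2 hb2⟩
      · rw [uIcc_of_ge hab] at hx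
        exact ⟨le_trans hb0 hx.1, le_trans hx.2 ha2⟩
    have hφab : IntervalIntegrable φ volume a b := hφint.mono_set hsub
    have hφnn_ae : 0 ≤ᵐ[volume.restrict (Ioc (0:ℝ) (2*π))] φ :=
      Filter.Eventually.of_forall hφnn
    have hnorm : ‖∫ t in a..b, g t‖ ≤ ∫ t in (0:ℝ)..(2*π), φ t := by
      rcases le_total a b with hab | hab
      · calc ‖∫ t in a..b, g t‖ ≤ ∫ t in a..b, ‖g t‖ :=
              intervalIntegral.norm_integral_le_integral_norm hab
          _ ≤ ∫ t in a..b, φ t :=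
              intervalIntegral.integral_mono_on hab hgi.norm hφab
                (fun x _ => hptwise x)
          _ ≤ ∫ t in (0:ℝ)..(2*π), φ t :=
              intervalIntegral.integral_mono_interval ha0 hab hb2 hφnn_ae hφint
      · calc ‖∫ t in a..b, g t‖ = ‖∫ t in b..a, g t‖ := by
              rw [intervalIntegral.integral_symm]; exact norm_neg _
          _ ≤ ∫ t in b..a, ‖g t‖ :=
              intervalIntegral.norm_integral_le_integral_norm hab
          _ ≤ ∫ t in b..a, φ t :=
              intervalIntegral.integral_mono_on hab hgi.symm.norm hφab.symm
                (fun x _ => hptwise x)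
          _ ≤ ∫ t in (0:ℝ)..(2*π), φ t :=
              intervalIntegral.integral_mono_interval hb0 hab ha2 hφnn_ae hφint
    rw [hkey]
    exact hnorm.trans hφ_bound
  · rw [hkey, intervalIntegral.integral_undef hgi]
    simp only [norm_zero]
    positivity
end

section
/- Let (ω_j)_{j∈ℕ} be a sequence of functions ω_j : (0,∞) → ℝ with ω_j ≥ 0, such that each κ ↦ −ω_j(κ)/κ is non-decreasing, and suppose there is a function M : (0,∞) → ℝ with ω_j(κ) ≤ M(κ) for all j and κ. Then for almost every κ₀ > 0 there exist a constant c and a subsequence (j_k) such that the derivative d/dκ(−ω_{j_k}(κ)/κ) exists at κ₀ and satisfies 0 ≤ d/dκ|_{κ=κ₀}(−ω_{j_k}(κ)/κ) ≤ c for all k. -/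
open Set Filter MeasureTheory
open scoped ENNReal NNReal

/-! For a.e. `κ₀ > 0`, work on a compact interval `[a, b] ⊂ (0, ∞)` around `κ₀`. There the
functions `g_j = -ω_j / κ` are monotone with increments `g_j b - g_j a ≤ M(a) / a`, uniformly in
`j`. Each `g_j` is differentiable a.e. with `∫_a^b |g_j'| ≤ g_j b - g_j a`, so by Fatou
`∫_a^b liminf_j |g_j'| ≤ M(a) / a < ∞`; hence `liminf_j g_j'(κ₀) < ∞` for a.e. `κ₀`, which is
exactly a bounded subsequence. Countably many such intervals cover `(0, ∞)`. -/

theorem MonotoneOn.lintegral_enorm_deriv_le {f : ℝ → ℝ} {a b : ℝ}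
    (hf : MonotoneOn f (Icc a b)) :
    ∫⁻ x in Icc a b, ‖deriv f x‖ₑ ≤ ENNReal.ofReal (f b - f a) := by
  rcases lt_or_ge b a with hba | hab
  · simp [Icc_eq_empty_of_lt hba]
  obtain ⟨G, hGf, hG, hG_le⟩ := hf.exists_tendsto_deriv_liminf_lintegral_enorm_le hab
  exact (lintegral_enorm_le_liminf_of_tendsto hGf fun n => (hG n).aemeasurable.enorm).trans hG_le

theorem MonotoneOn.deriv_nonneg_of_mem_Ioo {f : ℝ → ℝ} {a b x : ℝ}
    (hf : MonotoneOn f (Icc a b)) (hx : x ∈ Ioo a b) : 0 ≤ deriv f x := by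
  rw [← derivWithin_of_mem_nhds (Icc_mem_nhds hx.1 hx.2)]
  exact hf.derivWithin_nonneg

theorem MonotoneOn.ae_differentiableAt_of_Icc {f : ℝ → ℝ} {a b : ℝ}
    (hf : MonotoneOn f (Icc a b)) :
    ∀ᵐ x ∂volume.restrict (Ioo a b), DifferentiableAt ℝ f x := by
  filter_upwards [(hf.mono Ioo_subset_Icc_self).ae_differentiableWithinAt measurableSet_Ioo,
    ae_restrict_mem measurableSet_Ioo] with x hdiff hx
  exact hdiff.differentiableAt (Ioo_mem_nhds hx.1 hx.2)

theorem ENNReal.exists_strictMono_forall_le_of_liminf_lt_top {u : ℕ → ℝ≥0∞}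
    (h : liminf u atTop < ∞) : ∃ c : ℝ≥0, ∃ φ : ℕ → ℕ, StrictMono φ ∧ ∀ k, u (φ k) ≤ c := by
  obtain ⟨c, hc, -⟩ := ENNReal.lt_iff_exists_nnreal_btwn.mp h
  obtain ⟨φ, hφ, hφc⟩ := extraction_of_frequently_atTop (frequently_lt_of_liminf_lt (h := hc))
  exact ⟨c, φ, hφ, fun k => (hφc k).le⟩

section MonotoneSequence

variable {f : ℕ → ℝ → ℝ} {a b C : ℝ}

theorem ae_liminf_enorm_deriv_lt_top (hf : ∀ j, MonotoneOn (f j) (Icc a b))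
    (hC : ∀ j, f j b - f j a ≤ C) :
    ∀ᵐ x ∂volume.restrict (Icc a b), liminf (fun j => ‖deriv (f j) x‖ₑ) atTop < ∞ := by
  refine ae_lt_top (.liminf fun j => (measurable_deriv (f j)).enorm) (ne_top_of_le_ne_top
    (ENNReal.ofReal_ne_top (r := C)) ?_)
  calc ∫⁻ x in Icc a b, liminf (fun j => ‖deriv (f j) x‖ₑ) atTop
      ≤ liminf (fun j => ∫⁻ x in Icc a b, ‖deriv (f j) x‖ₑ) atTop :=
        lintegral_liminf_le fun j => (measurable_deriv (f j)).enorm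
    _ ≤ ENNReal.ofReal C := liminf_le_of_frequently_le' (.of_forall fun j =>
        (hf j).lintegral_enorm_deriv_le.trans (ENNReal.ofReal_le_ofReal (hC j)))

theorem ae_exists_subseq_hasDerivAt_bounded (hf : ∀ j, MonotoneOn (f j) (Icc a b))
    (hC : ∀ j, f j b - f j a ≤ C) :
    ∀ᵐ x ∂volume.restrict (Ioo a b), ∃ c : ℝ, ∃ φ : ℕ → ℕ, StrictMono φ ∧
      ∀ k, ∃ d : ℝ, HasDerivAt (f (φ k)) d x ∧ 0 ≤ d ∧ d ≤ c := by
  have hdiff : ∀ᵐ x ∂volume.restrict (Ioo a b), ∀ j, DifferentiableAt ℝ (f j) x :=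
    ae_all_iff.mpr fun j => (hf j).ae_differentiableAt_of_Icc
  have hfin := ae_restrict_of_ae_restrict_of_subset Ioo_subset_Icc_self
    (ae_liminf_enorm_deriv_lt_top hf hC)
  filter_upwards [hdiff, hfin, ae_restrict_mem measurableSet_Ioo] with x hdiff_x hfin_x hx
  obtain ⟨c, φ, hφ, hφc⟩ := ENNReal.exists_strictMono_forall_le_of_liminf_lt_top hfin_x
  have hderiv_le (k : ℕ) : deriv (f (φ k)) x ≤ c :=
    (le_abs_self _).trans (by simpa [← ofReal_norm] using hφc k)
  exact ⟨c, φ, hφ, fun k => ⟨_, (hdiff_x (φ k)).hasDerivAt,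
    (hf (φ k)).deriv_nonneg_of_mem_Ioo hx, hderiv_le k⟩⟩

end MonotoneSequence

/-- Struwe's monotonicity trick: if `ω_j ≥ 0`, each `κ ↦ −ω_j(κ)/κ` is non-decreasing on
`(0,∞)`, and `ω_j(κ) ≤ M(κ)` uniformly in `j`, then for almost every `κ₀ > 0` there is a
constant `c` and a subsequence along which `κ ↦ −ω_j(κ)/κ` is differentiable at `κ₀`
with derivative in `[0, c]`. -/
theorem struwe_ae_derivative_bound
    (ω : ℕ → ℝ → ℝ) (M : ℝ → ℝ)
    (hnonneg : ∀ j κ, 0 < κ → 0 ≤ ω j κ)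
    (hmono : ∀ j, ∀ κ κ' : ℝ, 0 < κ → κ ≤ κ' → -ω j κ / κ ≤ -ω j κ' / κ')
    (hbound : ∀ j κ, 0 < κ → ω j κ ≤ M κ) :
    ∀ᵐ κ₀ ∂(MeasureTheory.volume.restrict (Ioi (0 : ℝ))),
      ∃ c : ℝ, ∃ φ : ℕ → ℕ, StrictMono φ ∧
        ∀ k, ∃ d : ℝ, HasDerivAt (fun κ => -ω (φ k) κ / κ) d κ₀ ∧ 0 ≤ d ∧ d ≤ c := by
  rw [ae_restrict_iff' measurableSet_Ioi]
  refine ae_of_mem_of_ae_of_mem_inter_Ioo fun a b (ha : 0 < a) (hb : 0 < b) _ => ?_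
  have hmonoOn : ∀ j, MonotoneOn (fun κ => -ω j κ / κ) (Icc a b) :=
    fun j x hx y _ hxy => hmono j x y (ha.trans_le hx.1) hxy
  have hincr : ∀ j, -ω j b / b - -ω j a / a ≤ M a / a := fun j => by
    have hb_nonpos : -ω j b / b ≤ 0 := div_nonpos_of_nonpos_of_nonneg
      (neg_nonpos.mpr (hnonneg j b hb)) hb.le
    have ha_le : ω j a / a ≤ M a / a := div_le_div_of_nonneg_right (hbound j a ha) ha.le
    linarith [neg_div a (ω j a)]
  have hsubseq := ae_exists_subseq_hasDerivAt_bounded hmonoOn hincr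
  rw [ae_restrict_iff' measurableSet_Ioo] at hsubseq
  filter_upwards [hsubseq] with x hx hx' using hx hx'.2
end

section
/- Fix κ > 0 and 0 < ε < 1. Suppose ω : (0,∞) → [0,∞) satisfies: (i) κ' ↦ ω(κ')/κ' is non-increasing; (ii) the derivative of κ' ↦ −ω(κ')/κ' at κ exists and is at most c. Suppose further that for every κ' ∈ (0,κ) and δ > 0 there is a path γ with sup_t [L_ε(γ(t)) + κ' A(t)] < ω(κ') + δ, where L_ε(γ(t)) ≥ 0, A(t) ∈ ℝ, and ω(κ'') ≤ sup_t [L_ε(γ(t)) + κ'' A(t)] for all κ''. Then for all sufficiently large n there exists a path γ_n such that: (a) sup_t [L_ε(γ_n(t)) + κ A_n(t)] ≤ ω(κ) + κ/n; and (b) L_ε(γ_n(t)) ≤ 8κ²c whenever L_ε(γ_n(t)) + κ A_n(t) ≥ ω(κ) − κ/n. -/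
open Set

/-- An abstract sweepout: slice-wise value `ℓ t + κ * A t`, with nonnegative
regularized length `ℓ` and bounded slices. -/
structure AbstractSweepout where
  ℓ : ℝ → ℝ
  A : ℝ → ℝ
  nonneg : ∀ t ∈ Icc (0 : ℝ) 1, 0 ≤ ℓ t
  bdd : ∀ κ : ℝ, BddAbove (Set.range fun t : Icc (0 : ℝ) 1 => ℓ t + κ * A t)

/-- The max value of the sweepout for the functional `L_κ = ℓ + κ A`. -/
noncomputable def AbstractSweepout.sup (p : AbstractSweepout) (κ : ℝ) : ℝ :=
  ⨆ t : Icc (0 : ℝ) 1, (p.ℓ t + κ * p.A t)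


/-!
Write `f(κ) = ω(κ)/κ`. Since `(−f)'(κ) ≤ c`, for `κₙ = κ − 1/(4cn)` slightly below `κ` we have
`f(κₙ) < f(κ) + 1/(2n)`, so a `κₙ/(2n)`-optimal sweepout `p` for `L_{κₙ}` has all its slices
bounded by `κₙ (f(κ) + 1/n)`. The identity
`(ℓ + κ'A)/κ' − (ℓ + κA)/κ = ℓ (κ − κ')/(κκ')` turns this into both claims: dropping the
nonnegative right side gives the bound on `p.sup κ`, while on slices with
`L_κ ≥ ω(κ) − κ/n` the left side is at most `2/n`, whence `ℓ ≤ 8κκₙc ≤ 8κ²c`.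
-/

open Filter Topology

theorem eventually_lt_add_mul_sub_of_hasDerivAt_neg {f : ℝ → ℝ} {x d C : ℝ}
    (hd : HasDerivAt (fun y => -f y) d x) (hdC : d < C) :
    ∀ᶠ y in 𝓝[<] x, f y < f x + C * (x - y) := by
  filter_upwards [hd.hasDerivWithinAt.limsup_slope_le' (lt_irrefl x) hdC,
    self_mem_nhdsWithin] with y hslope (hyx : y < x)
  rw [slope_def_field, div_lt_iff_of_neg (sub_neg.mpr hyx)] at hslope
  linarith

section Slice

variable {ℓ a κ κ' M m : ℝ}

theorem slice_le_mul_of_le_mul (hℓ : 0 ≤ ℓ) (hκ' : 0 < κ') (hle : κ' ≤ κ)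
    (h : ℓ + κ' * a ≤ κ' * M) : ℓ + κ * a ≤ κ * M := by
  refine le_of_mul_le_mul_left ?_ hκ'
  nlinarith [mul_le_mul_of_nonneg_left h (hκ'.le.trans hle), mul_nonneg hℓ (sub_nonneg.mpr hle)]

theorem mul_sub_le_of_le_slice_of_slice_le (hκ' : 0 < κ') (hle : κ' ≤ κ)
    (h' : ℓ + κ' * a ≤ κ' * M) (h : κ * m ≤ ℓ + κ * a) :
    ℓ * (κ - κ') ≤ κ * κ' * (M - m) := by
  nlinarith [mul_le_mul_of_nonneg_left h' (hκ'.le.trans hle), mul_le_mul_of_nonneg_left h hκ'.le]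

end Slice

namespace AbstractSweepout

variable (p : AbstractSweepout)

theorem slice_le_sup (κ : ℝ) {t : ℝ} (ht : t ∈ Icc (0 : ℝ) 1) :
    p.ℓ t + κ * p.A t ≤ p.sup κ :=
  le_ciSup (p.bdd κ) ⟨t, ht⟩

variable {κ κ' M : ℝ}

theorem sup_le_mul_of_sup_le_mul (hκ' : 0 < κ') (hle : κ' ≤ κ) (h : p.sup κ' ≤ κ' * M) :
    p.sup κ ≤ κ * M :=
  have : Nonempty (Icc (0 : ℝ) 1) := ⟨⟨0, left_mem_Icc.mpr zero_le_one⟩⟩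
  ciSup_le fun t => slice_le_mul_of_le_mul (p.nonneg t t.2) hκ' hle
    ((p.slice_le_sup κ' t.2).trans h)

theorem length_mul_sub_le (hκ' : 0 < κ') (hle : κ' ≤ κ) (h : p.sup κ' ≤ κ' * M) {m t : ℝ}
    (ht : t ∈ Icc (0 : ℝ) 1) (hm : κ * m ≤ p.ℓ t + κ * p.A t) :
    p.ℓ t * (κ - κ') ≤ κ * κ' * (M - m) :=
  mul_sub_le_of_le_slice_of_slice_le hκ' hle ((p.slice_le_sup κ' ht).trans h) hm

end AbstractSweepout

theorem tendsto_sub_inv_mul_natCast_nhdsLT {κ C : ℝ} (hC : 0 < C) :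
    Tendsto (fun n : ℕ => κ - 1 / (C * n)) atTop (𝓝[<] κ) := by
  refine tendsto_nhdsWithin_iff.mpr ⟨?_, ?_⟩
  · have h : Tendsto (fun n : ℕ => 1 / (C * n)) atTop (𝓝 0) := by
      simpa only [one_div, mul_inv] using
        (tendsto_const_div_atTop_nhds_zero_nat C⁻¹).congr fun n => by rw [div_eq_mul_inv]
    simpa using tendsto_const_nhds.sub h
  · filter_upwards [eventually_gt_atTop 0] with n hn
    have : (0 : ℝ) < n := Nat.cast_pos.mpr hn
    simp only [mem_Iio, sub_lt_self_iff]
    positivity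

theorem exists_sweepout_of_div_lt {ω : ℝ → ℝ} {κ κ' C : ℝ} (hκ' : 0 < κ') (hlt : κ' < κ)
    (hC : 0 < C) (hf : ω κ' / κ' < ω κ / κ + C * (κ - κ'))
    (happrox : ∀ δ : ℝ, 0 < δ → ∃ p : AbstractSweepout, p.sup κ' < ω κ' + δ) :
    ∃ p : AbstractSweepout, p.sup κ ≤ ω κ + 2 * C * κ * (κ - κ') ∧
      ∀ t ∈ Icc (0 : ℝ) 1, ω κ - 2 * C * κ * (κ - κ') ≤ p.ℓ t + κ * p.A t →
        p.ℓ t ≤ 4 * C * κ ^ 2 := by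
  have hκ : 0 < κ := hκ'.trans hlt
  have hgap : 0 < κ - κ' := sub_pos.mpr hlt
  obtain ⟨p, hp⟩ := happrox (κ' * (C * (κ - κ'))) (by positivity)
  have hsup : p.sup κ' ≤ κ' * (ω κ / κ + 2 * (C * (κ - κ'))) := by
    have hω := (div_lt_iff₀' hκ').mp hf
    linarith
  refine ⟨p, ?_, fun t ht hge => ?_⟩
  · calc p.sup κ ≤ κ * (ω κ / κ + 2 * (C * (κ - κ'))) :=
          p.sup_le_mul_of_sup_le_mul hκ' hlt.le hsup
      _ = ω κ + 2 * C * κ * (κ - κ') := by field_simp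
  · have hlen := p.length_mul_sub_le hκ' hlt.le hsup (m := ω κ / κ - 2 * (C * (κ - κ'))) ht
      (by convert hge using 1; field_simp)
    have hlen' : p.ℓ t * (κ - κ') ≤ 4 * C * κ * κ' * (κ - κ') := by linarith
    calc p.ℓ t ≤ 4 * C * κ * κ' := le_of_mul_le_mul_right hlen' hgap
      _ ≤ 4 * C * κ * κ := by gcongr
      _ = 4 * C * κ ^ 2 := by ring

theorem uniform_length_bound_general
    (κ c : ℝ) (hκ : 0 < κ) (hc : 0 < c)
    (ω : ℝ → ℝ)
    (hderiv : ∃ d : ℝ, HasDerivAt (fun x => -ω x / x) d κ ∧ d ≤ c)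
    (happrox : ∀ κ' ∈ Ioo (0 : ℝ) κ, ∀ δ : ℝ, 0 < δ →
      ∃ p : AbstractSweepout, p.sup κ' < ω κ' + δ ∧
        ∀ κ'' : ℝ, 0 < κ'' → ω κ'' ≤ p.sup κ'') :
    ∃ n₀ : ℕ, ∀ n : ℕ, n₀ ≤ n →
      ∃ p : AbstractSweepout,
        p.sup κ ≤ ω κ + κ / n ∧
        ∀ t ∈ Icc (0 : ℝ) 1,
          ω κ - κ / n ≤ p.ℓ t + κ * p.A t → p.ℓ t ≤ 8 * κ ^ 2 * c := by
  obtain ⟨d, hd, hdc⟩ := hderiv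
  have hdiv := eventually_lt_add_mul_sub_of_hasDerivAt_neg (f := fun x => ω x / x)
    (by simpa only [neg_div] using hd) (by linarith : d < 2 * c)
  obtain ⟨n₀, hn₀⟩ := eventually_atTop.mp <|
    ((tendsto_sub_inv_mul_natCast_nhdsLT (κ := κ) (by positivity : 0 < 4 * c)).eventually
      (hdiv.and (Ioo_mem_nhdsLT hκ))).and (eventually_gt_atTop 0)
  refine ⟨n₀, fun n hn => ?_⟩
  obtain ⟨⟨hf, hκn, hκnκ⟩, hn⟩ := hn₀ n hn
  have hnR : (0 : ℝ) < n := Nat.cast_pos.mpr hn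
  have hgap : 2 * (2 * c) * κ * (κ - (κ - 1 / (4 * c * n))) = κ / n := by field_simp; ring
  obtain ⟨p, hsup, hlen⟩ := exists_sweepout_of_div_lt hκn hκnκ (by positivity) hf
    fun δ hδ => (happrox _ ⟨hκn, hκnκ⟩ δ hδ).imp fun _ => And.left
  exact ⟨p, hgap ▸ hsup, fun t ht hge => (hlen t ht (hgap ▸ hge)).trans_eq (by ring)⟩

/-- Uniform length bound from the derivative estimate on the min-max value
(abstract form of Proposition 3.3): if `κ' ↦ ω(κ')/κ'` is non-increasing, the derivative
of `κ' ↦ −ω(κ')/κ'` at `κ` is at most `c`, and for each `κ' < κ` there are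
almost-optimal sweepouts, then for all large `n` there are sweepouts `γ_n` with
max value at most `ω(κ) + κ/n` whose slices of value at least `ω(κ) − κ/n` have
regularized length at most `8κ²c`. -/
theorem uniform_length_bound
    (ε κ c : ℝ) (hε : ε ∈ Ioo (0 : ℝ) 1) (hκ : 0 < κ) (hc : 0 < c)
    (ω : ℝ → ℝ)
    (hω0 : ∀ κ' : ℝ, 0 < κ' → 0 ≤ ω κ')
    (hmono : ∀ κ₁ κ₂ : ℝ, 0 < κ₁ → κ₁ ≤ κ₂ → ω κ₂ / κ₂ ≤ ω κ₁ / κ₁)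
    (hderiv : ∃ d : ℝ, HasDerivAt (fun x => -ω x / x) d κ ∧ d ≤ c)
    (happrox : ∀ κ' ∈ Ioo (0 : ℝ) κ, ∀ δ : ℝ, 0 < δ →
      ∃ p : AbstractSweepout, p.sup κ' < ω κ' + δ ∧
        ∀ κ'' : ℝ, 0 < κ'' → ω κ'' ≤ p.sup κ'') :
    ∃ n₀ : ℕ, ∀ n : ℕ, n₀ ≤ n →
      ∃ p : AbstractSweepout,
        p.sup κ ≤ ω κ + κ / n ∧
        ∀ t ∈ Icc (0 : ℝ) 1,
          ω κ - κ / n ≤ p.ℓ t + κ * p.A t → p.ℓ t ≤ 8 * κ ^ 2 * c :=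
  uniform_length_bound_general κ c hκ hc ω hderiv happrox
end

section
/- Let ε ∈ (0,1) and let u ∈ W^{1,1+ε}(S¹;ℝ^N). Suppose h : S¹ → ℝ^N satisfies h = u'(ε² + |u'|²)^((ε−1)/2) almost everywhere, and that h ∈ C^k for some k ≥ 0. Then u' ∈ C^k, with u' = (ε² + τ^{-1}(|h|²))^((1−ε)/2) h, where τ(t) = (ε² + t)^{ε−1} t is strictly increasing on (−ε², ∞) with smooth inverse on its range. -/
open Set MeasureTheory Filter Function Real
open scoped Topology

lemma tau_hasStrictDerivAt {ε : ℝ} (hε0 : 0 < ε) {t : ℝ} (ht : -ε ^ 2 < t) :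
    HasStrictDerivAt (fun t : ℝ => (ε ^ 2 + t) ^ (ε - 1) * t)
      ((ε ^ 2 + t) ^ (ε - 2) * (ε * t + ε ^ 2)) t := by
  have hpos : 0 < ε ^ 2 + t := by linarith
  have h1 : HasStrictDerivAt (fun t : ℝ => ε ^ 2 + t) 1 t := by
    simpa using (hasStrictDerivAt_id t).const_add (ε ^ 2)
  have h2 : HasStrictDerivAt (fun t : ℝ => (ε ^ 2 + t) ^ (ε - 1))
      ((ε - 1) * (ε ^ 2 + t) ^ (ε - 1 - 1) * 1) t :=
    (Real.hasStrictDerivAt_rpow_const_of_ne hpos.ne' (ε - 1)).comp t h1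
  have h3 := h2.mul (hasStrictDerivAt_id t)
  refine h3.congr_deriv ?_
  have e1 : ε - 1 - 1 = ε - 2 := by ring
  rw [e1, show ε - 1 = (ε - 2) + 1 by ring, Real.rpow_add_one hpos.ne']
  simp only [id]
  ring

lemma tau_deriv_pos {ε : ℝ} (hε0 : 0 < ε) (hε1 : ε < 1) {t : ℝ} (ht : -ε ^ 2 < t) :
    0 < (ε ^ 2 + t) ^ (ε - 2) * (ε * t + ε ^ 2) := by
  have hpos : 0 < ε ^ 2 + t := by linarith
  have h2 : 0 < ε * t + ε ^ 2 := by nlinarith [mul_pos hε0 (show (0:ℝ) < t + ε ^ 2 by linarith), mul_pos (mul_pos hε0 hε0) (show (0:ℝ) < 1 - ε by linarith)]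
  exact mul_pos (Real.rpow_pos_of_pos hpos _) h2

lemma tau_tendsto_atTop {ε : ℝ} (hε0 : 0 < ε) :
    Tendsto (fun t : ℝ => (ε ^ 2 + t) ^ (ε - 1) * t) atTop atTop := by
  have hT1 : Tendsto (fun t : ℝ => (ε ^ 2 + t) ^ ε) atTop atTop :=
    (tendsto_rpow_atTop hε0).comp (tendsto_atTop_add_const_left atTop (ε ^ 2) tendsto_id)
  have h0 : Tendsto (fun t : ℝ => ε ^ 2 / (ε ^ 2 + t)) atTop (𝓝 0) :=
    Tendsto.div_atTop tendsto_const_nhds (tendsto_atTop_add_const_left atTop (ε ^ 2) tendsto_id)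
  have hT2 : Tendsto (fun t : ℝ => t / (ε ^ 2 + t)) atTop (𝓝 1) := by
    have h1 := Filter.Tendsto.sub (tendsto_const_nhds (x := (1:ℝ))) h0
    rw [sub_zero] at h1
    apply Filter.Tendsto.congr' _ (h1 : Tendsto (fun t : ℝ => 1 - ε ^ 2 / (ε ^ 2 + t)) atTop (𝓝 1))
    filter_upwards [eventually_gt_atTop (0 : ℝ)] with t ht
    have hne : ε ^ 2 + t ≠ 0 := by positivity
    field_simp
    ring
  apply Filter.Tendsto.congr' _ (hT1.atTop_mul_pos one_pos hT2)
  filter_upwards [eventually_gt_atTop (0 : ℝ)] with t ht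
  have hpos : (0 : ℝ) < ε ^ 2 + t := by positivity
  rw [show ε - 1 = ε - 1 from rfl, Real.rpow_sub hpos, Real.rpow_one]
  ring

lemma tau_tendsto_atBot {ε : ℝ} (hε0 : 0 < ε) (hε1 : ε < 1) :
    Tendsto (fun t : ℝ => (ε ^ 2 + t) ^ (ε - 1) * t) (𝓝[>] (-ε ^ 2)) atBot := by
  have hx : Tendsto (fun t : ℝ => ε ^ 2 + t) (𝓝[>] (-ε ^ 2)) (𝓝[>] (0 : ℝ)) := by
    apply tendsto_nhdsWithin_of_tendsto_nhds_of_eventually_within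
    · have h1 : Tendsto (fun t : ℝ => ε ^ 2 + t) (𝓝 (-ε ^ 2)) (𝓝 (ε ^ 2 + -ε ^ 2)) :=
        (continuous_const.add continuous_id).tendsto _
      simpa using h1.mono_left nhdsWithin_le_nhds
    · filter_upwards [self_mem_nhdsWithin] with t ht
      simp only [mem_Ioi] at ht ⊢
      linarith
  have hpow : Tendsto (fun x : ℝ => x ^ (ε - 1)) (𝓝[>] (0 : ℝ)) atTop := by
    have h1 : Tendsto (fun x : ℝ => (x⁻¹) ^ (1 - ε)) (𝓝[>] (0 : ℝ)) atTop :=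
      (tendsto_rpow_atTop (by linarith)).comp tendsto_inv_nhdsGT_zero
    apply Filter.Tendsto.congr' _ h1
    filter_upwards [self_mem_nhdsWithin] with x hx
    simp only [mem_Ioi] at hx
    rw [← Real.rpow_neg_one x, ← Real.rpow_mul hx.le]
    congr 1
    ring
  have hneg : (-ε ^ 2 : ℝ) < 0 := by nlinarith
  have := Filter.Tendsto.atTop_mul_neg hneg (hpow.comp hx)
    (tendsto_id.mono_right nhdsWithin_le_nhds)
  exact this

lemma tau_surj {ε : ℝ} (hε0 : 0 < ε) (hε1 : ε < 1) (y : ℝ) :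
    ∃ t ∈ Ioi (-ε ^ 2 : ℝ), (ε ^ 2 + t) ^ (ε - 1) * t = y := by
  set τ : ℝ → ℝ := fun t => (ε ^ 2 + t) ^ (ε - 1) * t with hτdef
  obtain ⟨t₁, ht₁y, ht₁⟩ :=
    (((tau_tendsto_atBot hε0 hε1).eventually (eventually_le_atBot y)).and
      self_mem_nhdsWithin).exists
  obtain ⟨t₂, ht₂y, ht₂⟩ :=
    (((tau_tendsto_atTop hε0).eventually (eventually_ge_atTop y)).and
      (eventually_ge_atTop t₁)).exists
  have hsub : Icc t₁ t₂ ⊆ Ioi (-ε ^ 2 : ℝ) := fun x hx => lt_of_lt_of_le ht₁ hx.1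
  have hcont : ContinuousOn τ (Icc t₁ t₂) := fun x hx =>
    ((tau_hasStrictDerivAt hε0 (hsub hx)).hasDerivAt.continuousAt).continuousWithinAt
  have hy : y ∈ Icc (τ t₁) (τ t₂) := ⟨ht₁y, ht₂y⟩
  obtain ⟨t, htmem, hteq⟩ := intermediate_value_Icc ht₂ hcont hy
  exact ⟨t, hsub htmem, hteq⟩

/-- Regularity transfer: if `g = u'` is the weak derivative of a `W^{1,1+ε}` curve and
`h = (ε² + ‖g‖²)^((ε−1)/2) • g` almost everywhere with `h` of class `C^k`, then the map
`t ↦ (ε² + t)^{ε−1} t` is strictly increasing on `(−ε², ∞)` with smooth inverse `σ` on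
its range, and `g` agrees a.e. with the `C^k` map `θ ↦ (ε² + σ(‖h θ‖²))^((1−ε)/2) • h θ`. -/
theorem regularity_transfer
    (N : ℕ) (ε : ℝ) (hε : ε ∈ Ioo (0 : ℝ) 1) (k : ℕ)
    (g h : ℝ → EuclideanSpace ℝ (Fin N))
    (hae : ∀ᵐ θ ∂(MeasureTheory.volume : Measure ℝ),
      h θ = (ε ^ 2 + ‖g θ‖ ^ 2) ^ ((ε - 1) / 2) • g θ)
    (hhk : ContDiff ℝ k h) :
    StrictMonoOn (fun t : ℝ => (ε ^ 2 + t) ^ (ε - 1) * t) (Ioi (-ε ^ 2))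
    ∧ ∃ σ : ℝ → ℝ,
        (∀ t ∈ Ioi (-ε ^ 2 : ℝ), σ ((ε ^ 2 + t) ^ (ε - 1) * t) = t)
        ∧ ContDiffOn ℝ (⊤ : ℕ∞) σ
            ((fun t : ℝ => (ε ^ 2 + t) ^ (ε - 1) * t) '' Ioi (-ε ^ 2))
        ∧ ContDiff ℝ k (fun θ => (ε ^ 2 + σ (‖h θ‖ ^ 2)) ^ ((1 - ε) / 2) • h θ)
        ∧ (∀ᵐ θ ∂(MeasureTheory.volume : Measure ℝ),
            g θ = (ε ^ 2 + σ (‖h θ‖ ^ 2)) ^ ((1 - ε) / 2) • h θ) := by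
  obtain ⟨hε0, hε1⟩ := hε
  set τ : ℝ → ℝ := fun t => (ε ^ 2 + t) ^ (ε - 1) * t with hτdef
  -- strict monotonicity
  have hmono : StrictMonoOn τ (Ioi (-ε ^ 2)) := by
    apply strictMonoOn_of_deriv_pos (convex_Ioi _)
    · exact fun t ht => ((tau_hasStrictDerivAt hε0 ht).hasDerivAt.continuousAt).continuousWithinAt
    · intro t ht
      rw [interior_Ioi] at ht
      rw [(tau_hasStrictDerivAt hε0 ht).hasDerivAt.deriv]
      exact tau_deriv_pos hε0 hε1 ht
  have hinj : InjOn τ (Ioi (-ε ^ 2)) := hmono.injOn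
  -- the image is everything
  have himg : τ '' Ioi (-ε ^ 2) = univ :=
    eq_univ_of_forall fun y => by
      obtain ⟨t, ht, hty⟩ := tau_surj hε0 hε1 y
      exact ⟨t, ht, hty⟩
  -- the inverse function
  set σ : ℝ → ℝ := invFunOn τ (Ioi (-ε ^ 2)) with hσdef
  have hmemimg : ∀ y : ℝ, ∃ t ∈ Ioi (-ε ^ 2 : ℝ), τ t = y := fun y => by
    have : y ∈ τ '' Ioi (-ε ^ 2) := himg ▸ mem_univ y
    obtain ⟨t, ht, hty⟩ := this
    exact ⟨t, ht, hty⟩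
  have hσmem : ∀ y : ℝ, σ y ∈ Ioi (-ε ^ 2 : ℝ) := fun y => invFunOn_mem (hmemimg y)
  have hσright : ∀ y : ℝ, τ (σ y) = y := fun y => invFunOn_eq (hmemimg y)
  have hleft : ∀ t ∈ Ioi (-ε ^ 2 : ℝ), σ (τ t) = t := fun t ht =>
    hinj.leftInvOn_invFunOn ht
  -- smoothness of σ on the image
  have hτ_cd : ∀ t ∈ Ioi (-ε ^ 2 : ℝ), ContDiffAt ℝ (⊤ : ℕ∞) τ t := by
    intro t ht
    have hpos : 0 < ε ^ 2 + t := by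
      have := mem_Ioi.mp ht; linarith
    exact (((contDiff_const.add contDiff_id).contDiffAt).rpow_const_of_ne hpos.ne').mul
      contDiffAt_id
  have hσ_cd : ContDiffOn ℝ (⊤ : ℕ∞) σ (τ '' Ioi (-ε ^ 2)) := by
    rintro y ⟨t, ht, rfl⟩
    have hd := tau_hasStrictDerivAt hε0 ht
    have hd0 : (ε ^ 2 + t) ^ (ε - 2) * (ε * t + ε ^ 2) ≠ 0 := (tau_deriv_pos hε0 hε1 ht).ne'
    have S := hd.hasStrictFDerivAt_equiv hd0
    have hgit : ContDiffAt ℝ (⊤ : ℕ∞) ((hτ_cd t ht).localInverse S.hasFDerivAt (by simp)) (τ t) :=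
      (hτ_cd t ht).to_localInverse S.hasFDerivAt (by simp)
    set G : ℝ → ℝ := (hτ_cd t ht).localInverse S.hasFDerivAt (by simp) with hGdef
    have hGeq : G = S.localInverse τ _ t := rfl
    have hrinv : ∀ᶠ y' in 𝓝 (τ t), τ (G y') = y' := by
      rw [hGeq]; exact S.eventually_right_inverse
    have hGim : G (τ t) = t := by rw [hGeq]; exact S.localInverse_apply_image
    have hGc : ContinuousAt G (τ t) := by rw [hGeq]; exact S.localInverse_continuousAt
    have hGmem : ∀ᶠ y' in 𝓝 (τ t), G y' ∈ Ioi (-ε ^ 2 : ℝ) :=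
      hGc (isOpen_Ioi.mem_nhds (by rw [hGim]; exact ht))
    refine hgit.contDiffWithinAt.congr_of_eventuallyEq ?_ ?_
    · filter_upwards [mem_nhdsWithin_of_mem_nhds (hrinv.and hGmem)] with y' hy'
      exact hinj (hσmem y') hy'.2 (by rw [hσright y', hy'.1])
    · rw [hGim]
      exact hleft t ht
  -- smoothness of the reconstructed map
  have hσC : ContDiff ℝ ((⊤ : ℕ∞) : WithTop ℕ∞) σ := by
    rw [← contDiffOn_univ, ← himg]; exact hσ_cd
  have hpos' : ∀ y : ℝ, 0 < ε ^ 2 + σ y := fun y => by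
    have := mem_Ioi.mp (hσmem y); linarith
  have h1 : ContDiff ℝ k fun θ => σ (‖h θ‖ ^ 2) := (hσC.of_le (by exact_mod_cast le_top)).comp (hhk.norm_sq ℝ)
  have h2 : ContDiff ℝ k fun θ => (ε ^ 2 + σ (‖h θ‖ ^ 2)) ^ ((1 - ε) / 2) :=
    (contDiff_const.add h1).rpow_const_of_ne fun θ => (hpos' _).ne'
  refine ⟨hmono, σ, hleft, hσ_cd, h2.smul hhk, ?_⟩
  -- a.e. identity
  filter_upwards [hae] with θ hθ
  have hb : 0 < ε ^ 2 + ‖g θ‖ ^ 2 := by positivity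
  have hc : 0 < (ε ^ 2 + ‖g θ‖ ^ 2) ^ ((ε - 1) / 2) := Real.rpow_pos_of_pos hb _
  have hn : ‖h θ‖ ^ 2 = (ε ^ 2 + ‖g θ‖ ^ 2) ^ (ε - 1) * ‖g θ‖ ^ 2 := by
    rw [hθ, norm_smul, mul_pow, Real.norm_eq_abs, sq_abs]
    congr 1
    rw [← Real.rpow_natCast ((ε ^ 2 + ‖g θ‖ ^ 2) ^ ((ε - 1) / 2)) 2,
      ← Real.rpow_mul hb.le]
    norm_num
  have hστ : σ (‖h θ‖ ^ 2) = ‖g θ‖ ^ 2 := by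
    rw [hn]
    exact hleft _ (by simp only [mem_Ioi]; nlinarith [sq_nonneg (‖g θ‖), sq_nonneg ε, pow_pos hε0 2])
  rw [hστ, hθ, smul_smul, ← Real.rpow_add hb, show (1 - ε) / 2 + (ε - 1) / 2 = 0 by ring,
    Real.rpow_zero, one_smul]
end
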